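/- Fix k ≥ 1. For all sufficiently large m and every even s with 1 ≤ s ≤ 2k, one has W_m(s) ≤ [0; (1_{2k−1}, 2)^{m+1}] + [\overline{2; 1_{2k−1}}]; that is, the maximum of W_m(s) over even s is attained at the value corresponding to s = 2k. -/

import Mathlib

open Filter Real

/-- Distance from a real number to the nearest integer. -/
noncomputable def intDist (ξ : ℝ) : ℝ := |ξ - round ξ|

/-- Irrationality measure function `ψ_α(t) = min {‖qα‖ : q ∈ ℤ, 1 ≤ q ≤ t}`. -/
noncomputable def psi (α : ℝ) (t : ℝ) : ℝ :=
  sInf {x : ℝ | ∃ q : ℤ, 1 ≤ q ∧ (q : ℝ) ≤ t ∧ x = intDist ((q : ℝ) * α)}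

/-- `f₀(x) = (√5 + 1)/(√5 + √(5 - 4/x²))`. -/
noncomputable def f0 (x : ℝ) : ℝ :=
  (Real.sqrt 5 + 1) / (Real.sqrt 5 + Real.sqrt (5 - 4 / x ^ 2))

/-- Value of a finite regular continued fraction `[a₀; a₁, …, aₙ]`. -/
noncomputable def cfVal : List ℤ → ℝ
  | [] => 0
  | [a] => (a : ℝ)
  | a :: b :: l => (a : ℝ) + 1 / cfVal (b :: l)

/-- The list `[a 0, a 1, …, a n]`. -/
def cfList (a : ℕ → ℤ) (n : ℕ) : List ℤ := (List.range (n + 1)).map a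

/-- `α` is the value of the infinite continued fraction with partial quotients `a`,
i.e. the convergents `[a₀; a₁, …, aₙ]` tend to `α`. -/
def IsCFExp (a : ℕ → ℤ) (α : ℝ) : Prop :=
  Filter.Tendsto (fun n => cfVal (cfList a n)) Filter.atTop (nhds α)

/-- Denominators `q_n` of the convergents of the continued fraction with
partial quotients `a` : `q₀ = 1`, `q₁ = a₁`, `q_{n+2} = a_{n+2} q_{n+1} + q_n`. -/
def cfDen (a : ℕ → ℤ) : ℕ → ℤ
  | 0 => 1
  | 1 => a 1
  | n + 2 => a (n + 2) * cfDen a (n + 1) + cfDen a n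

/-- Partial quotients of `α_k = [overline{1_{2k-1}, 2}]` (for `k = 0` this gives
the all-ones sequence, the expansion of the golden ratio `α₀ = φ`). -/
def aSeq (k : ℕ) (n : ℕ) : ℤ := if (n + 1) % (2 * k) = 0 then 2 else 1

/-- Partial quotients of `β_k = [0; 1_{k-1}, overline{2, 1_{2k-1}}]`. -/
def bSeq (k : ℕ) (n : ℕ) : ℤ :=
  if n = 0 then 0 else if n < k then 1 else if (n - k) % (2 * k) = 0 then 2 else 1

/-- Partial quotients of `β_k^{(1)} = [0; 1_k, overline{2, 1_{2k-1}}]`. -/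
def b1Seq (k : ℕ) (n : ℕ) : ℤ :=
  if n = 0 then 0 else if n < k + 1 then 1
  else if (n - (k + 1)) % (2 * k) = 0 then 2 else 1

/-- Partial quotients of `β_k^{(2)} = [0; 1_{k-2}, overline{2, 1_{2k-1}}]`. -/
def b2Seq (k : ℕ) (n : ℕ) : ℤ :=
  if n = 0 then 0 else if n < k - 1 then 1
  else if (n - (k - 1)) % (2 * k) = 0 then 2 else 1

/-- `D_k = (2α_k + 1)/(2α_k + 2)` as a function of `α_k`. -/
noncomputable def Dk (αk : ℝ) : ℝ := (2 * αk + 1) / (2 * αk + 2)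

/-- `g_k(x) = 2D_k/(1 + √(1 - 4D_k(1-D_k)/x²))` as a function of `α_k`. -/
noncomputable def gFun (αk : ℝ) (x : ℝ) : ℝ :=
  2 * Dk αk / (1 + Real.sqrt (1 - 4 * Dk αk * (1 - Dk αk) / x ^ 2))

/-- `f_k` for odd `k`, as a function of `α_k` and `β_k`. -/
noncomputable def fOdd (αk βk : ℝ) (x : ℝ) : ℝ :=
  2 * Dk αk / (1 + Real.sqrt (1 - 2 * αk / ((2 * βk + 1) * (αk + 1) * x ^ 2)))

/-- `f_k` for even `k`, as a function of `α_k`, `β_k^{(1)}` and `β_k^{(2)}`. -/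
noncomputable def fEven (αk β1 β2 : ℝ) (x : ℝ) : ℝ :=
  2 * Dk αk / (1 + Real.sqrt (1 - 2 * αk / ((β1 + β2 + 1) * (αk + 1) * x ^ 2)))

/-- The block `(1_{2k-1}, 2)` of partial quotients. -/
def block (k : ℕ) : List ℤ := List.replicate (2 * k - 1) 1 ++ [2]

/-- `m` repetitions of the block `(1_{2k-1}, 2)`. -/
def blocks (k : ℕ) : ℕ → List ℤ
  | 0 => []
  | m + 1 => block k ++ blocks k m

/-- Partial quotients of the finite continued fraction `[0; 1_{s-1}, 2, (1_{2k-1}, 2)^m]`. -/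
def wFin (k m s : ℕ) : List ℤ := 0 :: (List.replicate (s - 1) 1 ++ [2] ++ blocks k m)

/-- Partial quotients of `[1; 1_{2k-s-1}, overline{2, 1_{2k-1}}]` (for `1 ≤ s ≤ 2k-1`). -/
def wSeq (k s : ℕ) (n : ℕ) : ℤ :=
  if n = 0 then 1
  else if n < 2 * k - s then 1
  else if (n - (2 * k - s)) % (2 * k) = 0 then 2 else 1

/-- Partial quotients of `γ = [overline{2, 1_{2k-1}}]`. -/
def gSeq (k : ℕ) (n : ℕ) : ℤ := if n % (2 * k) = 0 then 2 else 1

/-- Partial quotients of the finite continued fraction `[0; (1_{2k-1}, 2)^{m+1}]`. -/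
def topFin (k m : ℕ) : List ℤ := 0 :: blocks k (m + 1)

/-- Partial quotients of `1/α_k = [0; overline{1_{2k-1}, 2}]`. -/
def invSeq (k : ℕ) (n : ℕ) : ℤ := if n = 0 then 0 else if n % (2 * k) = 0 then 2 else 1

open Set

/-! Crude bounds suffice. A continued fraction whose partial quotients lie in `{1, 2}` has value
in `[1, 3]`. For even `s < 2k` both `s ≥ 2` and `2k − s ≥ 2`, so `W_m(s)` has the shape
`[0; 1, …] + [1; 1, …] ≤ 3/4 + 7/4`, whereas `W_m(2k) = [0; …] + [2; …] ≥ 1/3 + 7/3`. -/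

lemma cfVal_cons_cons (a b : ℤ) (l : List ℤ) :
    cfVal (a :: b :: l) = a + 1 / cfVal (b :: l) := rfl

lemma cfVal_mem_Icc {N : ℤ} :
    ∀ l : List ℤ, l ≠ [] → (∀ x ∈ l, x ∈ Icc 1 N) → cfVal l ∈ Icc (1 : ℝ) (N + 1)
  | [], hne, _ => absurd rfl hne
  | [a], _, h => by
      obtain ⟨h1, hN⟩ := h a (by simp)
      have h1' : (1 : ℝ) ≤ a := by exact_mod_cast h1
      have hN' : (a : ℝ) ≤ N := by exact_mod_cast hN
      exact ⟨h1', by simp only [cfVal]; linarith⟩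
  | a :: b :: l, _, h => by
      obtain ⟨ha1, haN⟩ := h a (by simp)
      obtain ⟨hv1, -⟩ := cfVal_mem_Icc (b :: l) (by simp) fun x hx => h x (by simp_all)
      have hinv_pos : 0 < 1 / cfVal (b :: l) := by positivity
      have hinv_le : 1 / cfVal (b :: l) ≤ 1 := by rw [div_le_one (by positivity)]; exact hv1
      rw [cfVal_cons_cons]
      constructor
      · have : (1 : ℝ) ≤ a := by exact_mod_cast ha1
        linarith
      · have : (a : ℝ) ≤ N := by exact_mod_cast haN
        linarith

lemma add_inv_succ_le_cfVal_cons {N : ℤ} (a : ℤ) {t : List ℤ} (ht : t ≠ [])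
    (hmem : ∀ x ∈ t, x ∈ Icc 1 N) : a + 1 / (N + 1) ≤ cfVal (a :: t) := by
  obtain ⟨b, l, rfl⟩ := List.exists_cons_of_ne_nil ht
  obtain ⟨hv1, hvN⟩ := cfVal_mem_Icc _ ht hmem
  rw [cfVal_cons_cons]
  gcongr

lemma cfVal_cons_one_cons_le {N : ℤ} (a : ℤ) {t : List ℤ} (ht : t ≠ [])
    (hmem : ∀ x ∈ t, x ∈ Icc 1 N) : cfVal (a :: 1 :: t) ≤ a + (N + 1) / (N + 2) := by
  obtain ⟨b, l, rfl⟩ := List.exists_cons_of_ne_nil ht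
  obtain ⟨hv1, hvN⟩ := cfVal_mem_Icc _ ht hmem
  set v := cfVal (b :: l)
  have hv : 0 < v := by linarith
  rw [cfVal_cons_cons, cfVal_cons_cons, add_le_add_iff_left]
  push_cast
  rw [div_le_div_iff₀ (by positivity) (by linarith), one_mul, one_add_div hv.ne', mul_div_assoc',
    le_div_iff₀ hv]
  nlinarith

lemma cfList_succ (a : ℕ → ℤ) (n : ℕ) :
    cfList a (n + 1) = a 0 :: cfList (fun i => a (i + 1)) n := by
  simp only [cfList, List.range_succ_eq_map (n := n + 1), List.map_cons, List.map_map]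
  rfl

lemma cfList_ne_nil (a : ℕ → ℤ) (n : ℕ) : cfList a n ≠ [] := by
  simp [cfList]

lemma forall_mem_cfList {p : ℤ → Prop} {a : ℕ → ℤ} (h : ∀ i, p (a i)) (n : ℕ) :
    ∀ x ∈ cfList a n, p x := by
  simpa [cfList] using fun i _ => h i

section PartialQuotients

variable {k : ℕ}

lemma wSeq_mem_Icc (s n : ℕ) : wSeq k s n ∈ Icc 1 2 := by
  unfold wSeq; split_ifs <;> simp

lemma gSeq_mem_Icc (n : ℕ) : gSeq k n ∈ Icc 1 2 := by
  unfold gSeq; split_ifs <;> simp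

lemma mem_Icc_of_mem_blocks : ∀ {m : ℕ} {x : ℤ}, x ∈ blocks k m → x ∈ Icc 1 2
  | 0, _, hx => by simp [blocks] at hx
  | m + 1, x, hx => by
      rcases List.mem_append.1 hx with hx | hx
      · simp only [block, List.mem_append, List.mem_replicate, List.mem_singleton] at hx
        rcases hx with ⟨-, rfl⟩ | rfl <;> simp
      · exact mem_Icc_of_mem_blocks hx

lemma wFin_eq (m : ℕ) {s : ℕ} (hs : 2 ≤ s) :
    wFin k m s = 0 :: 1 :: (List.replicate (s - 2) 1 ++ [2] ++ blocks k m) := by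
  obtain ⟨r, rfl⟩ := Nat.exists_eq_add_of_le' hs
  simp [wFin, List.replicate_succ]

lemma cfVal_wFin_le (m : ℕ) {s : ℕ} (hs : 2 ≤ s) : cfVal (wFin k m s) ≤ 3 / 4 := by
  have h := cfVal_cons_one_cons_le (N := 2) 0 (t := List.replicate (s - 2) 1 ++ [2] ++ blocks k m)
    (by simp) fun x hx => by
      simp only [List.mem_append, List.mem_replicate, List.mem_singleton] at hx
      rcases hx with (⟨-, rfl⟩ | rfl) | hx
      · simp
      · simp
      · exact mem_Icc_of_mem_blocks hx
  rw [wFin_eq m hs]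
  norm_num at h ⊢
  exact h

lemma inv_three_le_cfVal_topFin (m : ℕ) : 1 / 3 ≤ cfVal (topFin k m) := by
  have h := add_inv_succ_le_cfVal_cons (N := 2) 0 (t := blocks k (m + 1))
    (by simp [blocks, block]) fun _ => mem_Icc_of_mem_blocks
  norm_num at h
  exact h

lemma cfVal_cfList_wSeq_le {s : ℕ} (hs : 2 ≤ 2 * k - s) (n : ℕ) :
    cfVal (cfList (wSeq k s) (n + 2)) ≤ 7 / 4 := by
  have h0 : wSeq k s 0 = 1 := rfl
  have h1 : wSeq k s 1 = 1 := by simp [wSeq]; omega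
  rw [cfList_succ, cfList_succ, h0, h1]
  have h := cfVal_cons_one_cons_le (N := 2) 1 (cfList_ne_nil _ n)
    (forall_mem_cfList (fun i => wSeq_mem_Icc (k := k) s (i + 1 + 1)) n)
  norm_num at h
  exact h

lemma seven_thirds_le_cfVal_cfList_gSeq (n : ℕ) : 7 / 3 ≤ cfVal (cfList (gSeq k) (n + 1)) := by
  rw [cfList_succ]
  have h := add_inv_succ_le_cfVal_cons (N := 2) (gSeq k 0) (cfList_ne_nil _ n)
    (forall_mem_cfList (fun i => gSeq_mem_Icc (k := k) (i + 1)) n)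
  simp only [gSeq, Nat.zero_mod, if_true] at h
  norm_num at h
  exact h

end PartialQuotients

theorem dirichlet_discrete_stmt12_general (k : ℕ) (w : ℕ → ℝ)
    (hw : ∀ s, 1 ≤ s → s ≤ 2 * k - 1 → IsCFExp (wSeq k s) (w s))
    (γ : ℝ) (hγ : IsCFExp (gSeq k) γ) :
    ∀ᶠ m : ℕ in atTop, ∀ s, 1 ≤ s → s ≤ 2 * k → Even s →
      (if s = 2 * k then cfVal (topFin k m) + γ else cfVal (wFin k m s) + w s) ≤
        cfVal (topFin k m) + γ := by
  refine Eventually.of_forall fun m s hs1 hs2k hse => ?_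
  split_ifs with hs
  · rfl
  obtain ⟨r, rfl⟩ := hse
  have hw_le : w (r + r) ≤ 7 / 4 :=
    le_of_tendsto ((hw _ hs1 (by omega)).comp (tendsto_add_atTop_nat 2))
      (Eventually.of_forall (cfVal_cfList_wSeq_le (by omega)))
  have hγ_ge : 7 / 3 ≤ γ :=
    ge_of_tendsto (hγ.comp (tendsto_add_atTop_nat 1))
      (Eventually.of_forall seven_thirds_le_cfVal_cfList_gSeq)
  linarith [cfVal_wFin_le (k := k) m (s := r + r) (by omega), inv_three_le_cfVal_topFin (k := k) m]

/-- Lemma 5, even `s`. Fix `k ≥ 1` and let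
`W_m(s) = [0; 1_{s−1}, 2, (1_{2k−1}, 2)^m] + [1; 1_{2k−s−1}, overline{2, 1_{2k−1}}]`
for `1 ≤ s ≤ 2k−1` (the second, infinite, summand being `w s`), while
`W_m(2k) = [0; (1_{2k−1}, 2)^{m+1}] + [overline{2, 1_{2k−1}}]` (with `γ` the purely
periodic second summand). For all sufficiently large `m` and every even `1 ≤ s ≤ 2k`,
one has `W_m(s) ≤ W_m(2k)`. -/
theorem dirichlet_discrete_stmt12 (k : ℕ) (hk : 1 ≤ k) (w : ℕ → ℝ)
    (hw : ∀ s, 1 ≤ s → s ≤ 2 * k - 1 → IsCFExp (wSeq k s) (w s))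
    (γ : ℝ) (hγ : IsCFExp (gSeq k) γ) :
    ∀ᶠ m : ℕ in atTop, ∀ s, 1 ≤ s → s ≤ 2 * k → Even s →
      (if s = 2 * k then cfVal (topFin k m) + γ else cfVal (wFin k m s) + w s) ≤
        cfVal (topFin k m) + γ :=
  dirichlet_discrete_stmt12_general k w hw γ hγ
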